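/- Let d ≥ 3 and α ≥ (d-2)/d. Let I ⊆ ℝ be an open interval with 0 ∈ I, and let φ : I → ℝ be continuous, strictly increasing with φ(0) = 0, such that for every compact interval J ⊆ I there exists a constant C_J > 0 with |φ(r)| ≤ C_J |r|^α for all r ∈ J. Let β : φ(I) → I denote the inverse function of φ, i.e. β(φ(r)) = r for all r ∈ I. Then for every R > 0 such that the interval [-R^{-(d-2)}, R^{-(d-2)}] is contained in φ(I), both integrals diverge: ∫_R^∞ ρ^{d-1} β(ρ^{-(d-2)}) dρ = +∞ and ∫_R^∞ ρ^{d-1} (-β(-ρ^{-(d-2)})) dρ = +∞. -/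

import Mathlib

open MeasureTheory Filter Set


lemma aux_inv_top {M c : ℝ} (hM : 0 < M) (hc : 0 < c) :
    ∫⁻ x in Set.Ioi M, ENNReal.ofReal (c * x⁻¹) = ⊤ := by
  by_contra h
  have hlt : ∫⁻ x in Set.Ioi M, ENNReal.ofReal (c * x⁻¹) < ⊤ := lt_top_iff_ne_top.2 h
  have hmeas : AEStronglyMeasurable (fun x : ℝ => c * x⁻¹)
      (volume.restrict (Set.Ioi M)) :=
    (measurable_const.mul measurable_inv).aestronglyMeasurable
  have hpos : 0 ≤ᵐ[volume.restrict (Set.Ioi M)] fun x : ℝ => c * x⁻¹ := by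
    filter_upwards [ae_restrict_mem measurableSet_Ioi] with x hx
    have : 0 < x := hM.trans hx
    positivity
  have hint : MeasureTheory.IntegrableOn (fun x : ℝ => c * x⁻¹) (Set.Ioi M) :=
    ⟨hmeas, (hasFiniteIntegral_iff_ofReal hpos).2 hlt⟩
  have hint2 : MeasureTheory.IntegrableOn (fun x : ℝ => x ^ (-1 : ℝ)) (Set.Ioi M) := by
    have h' := hint.const_mul c⁻¹
    have : (fun x : ℝ => c⁻¹ * (c * x⁻¹)) = fun x : ℝ => x ^ (-1 : ℝ) := by
      funext x
      rw [Real.rpow_neg_one]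
      field_simp
    rwa [this] at h'
  rw [integrableOn_Ioi_rpow_iff hM] at hint2
  linarith

lemma aux_top {R c : ℝ} (hR : 0 < R) (hc : 0 < c) (f : ℝ → ℝ)
    (hf : ∀ ρ, max R 1 < ρ → c * ρ⁻¹ ≤ f ρ) :
    ∫⁻ ρ in Set.Ici R, ENNReal.ofReal (f ρ) = ⊤ := by
  have hM : 0 < max R 1 := lt_of_lt_of_le hR (le_max_left _ _)
  have h1 : ∫⁻ ρ in Set.Ioi (max R 1), ENNReal.ofReal (c * ρ⁻¹)
      ≤ ∫⁻ ρ in Set.Ioi (max R 1), ENNReal.ofReal (f ρ) := by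
    apply lintegral_mono_ae
    rw [ae_restrict_iff' measurableSet_Ioi]
    filter_upwards with x hx
    exact ENNReal.ofReal_le_ofReal (hf x hx)
  have h2 : ∫⁻ ρ in Set.Ioi (max R 1), ENNReal.ofReal (f ρ)
      ≤ ∫⁻ ρ in Set.Ici R, ENNReal.ofReal (f ρ) := by
    apply lintegral_mono_set
    intro x hx
    exact le_of_lt (lt_of_le_of_lt (le_max_left _ _) (mem_Ioi.1 hx))
  have := aux_inv_top hM hc
  rw [this] at h1
  exact top_le_iff.1 (h1.trans h2)


lemma aux_key (d : ℕ) (hd : 3 ≤ d) (α : ℝ)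
    (hα : ((d : ℝ) - 2) / d ≤ α)
    (I : Set ℝ) (hIconv : Convex ℝ I) (h0I : (0 : ℝ) ∈ I)
    (φ : ℝ → ℝ) (hφmono : StrictMonoOn φ I) (hφ0 : φ 0 = 0)
    (hgrowth : ∀ r₁ r₂ : ℝ, Set.Icc r₁ r₂ ⊆ I →
      ∃ C > 0, ∀ r ∈ Set.Icc r₁ r₂, |φ r| ≤ C * |r| ^ α)
    (β : ℝ → ℝ) (hβ : ∀ r ∈ I, β (φ r) = r)
    (R : ℝ) (hR : 0 < R)
    (hrange : Set.Icc (-(R ^ (-((d : ℝ) - 2)))) (R ^ (-((d : ℝ) - 2))) ⊆ φ '' I) :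
    ∃ C > 0, ∀ s : ℝ, 0 < s → s ≤ R ^ (-((d : ℝ) - 2)) →
      (s / C) ^ α⁻¹ ≤ β s ∧ (s / C) ^ α⁻¹ ≤ -β (-s) := by
  set s₀ : ℝ := R ^ (-((d : ℝ) - 2)) with hs₀def
  have hs₀pos : 0 < s₀ := Real.rpow_pos_of_pos hR _
  have hαpos : 0 < α := by
    have hd3 : (3 : ℝ) ≤ (d : ℝ) := by exact_mod_cast hd
    have : 0 < ((d : ℝ) - 2) / d := div_pos (by linarith) (by linarith)
    linarith
  obtain ⟨r₀, hr₀I, hφr₀⟩ := hrange ⟨by linarith, le_refl s₀⟩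
  obtain ⟨r₁, hr₁I, hφr₁⟩ := hrange (show -s₀ ∈ Set.Icc (-s₀) s₀ from ⟨le_refl _, by linarith⟩)
  have hr₀pos : 0 < r₀ := by
    have := (hφmono.lt_iff_lt h0I hr₀I).1
    rw [hφ0, hφr₀] at this
    exact this hs₀pos
  have hr₁neg : r₁ < 0 := by
    have := (hφmono.lt_iff_lt hr₁I h0I).1
    rw [hφ0, hφr₁] at this
    exact this (by linarith)
  have hIcc : Set.Icc r₁ r₀ ⊆ I := fun x hx =>
    hIconv.ordConnected.out hr₁I hr₀I hx
  obtain ⟨C, hC, hCbound⟩ := hgrowth r₁ r₀ hIcc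
  refine ⟨C, hC, fun s hs hss₀ => ?_⟩
  constructor
  · obtain ⟨r, hrI, hφr⟩ := hrange ⟨by linarith, hss₀⟩
    have hβs : β s = r := by rw [← hφr, hβ r hrI]
    have hrpos : 0 < r := by
      have := (hφmono.lt_iff_lt h0I hrI).1
      rw [hφ0, hφr] at this; exact this hs
    have hrr₀ : r ≤ r₀ := by
      have := (hφmono.le_iff_le hrI hr₀I).mp
      rw [hφr, hφr₀] at this; exact this hss₀
    have hb := hCbound r ⟨by linarith, hrr₀⟩
    rw [hφr, abs_of_pos hs, abs_of_pos hrpos] at hb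
    rw [hβs]
    calc (s / C) ^ α⁻¹ ≤ (r ^ α) ^ α⁻¹ := by
          apply Real.rpow_le_rpow (by positivity) _ (by positivity)
          rw [div_le_iff₀ hC]; linarith [hb]
      _ = r := Real.rpow_rpow_inv hrpos.le hαpos.ne'
  · obtain ⟨r, hrI, hφr⟩ := hrange (show -s ∈ Set.Icc (-s₀) s₀ by
      constructor <;> [linarith; linarith])
    have hβs : β (-s) = r := by rw [← hφr, hβ r hrI]
    have hrneg : r < 0 := by
      have := (hφmono.lt_iff_lt hrI h0I).1
      rw [hφ0, hφr] at this; exact this (by linarith)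
    have hrr₁ : r₁ ≤ r := by
      have := (hφmono.le_iff_le hr₁I hrI).1
      rw [hφr, hφr₁] at this; exact this (by linarith)
    have hb := hCbound r ⟨hrr₁, by linarith⟩
    rw [hφr, abs_of_neg (by linarith : -s < 0), abs_of_neg hrneg, neg_neg] at hb
    rw [hβs]
    calc (s / C) ^ α⁻¹ ≤ ((-r) ^ α) ^ α⁻¹ := by
          apply Real.rpow_le_rpow (by positivity) _ (by positivity)
          rw [div_le_iff₀ hC]; linarith [hb]
      _ = -r := Real.rpow_rpow_inv (by linarith) hαpos.ne'


/-- If `φ` is continuous and strictly increasing on an open interval `I ∋ 0`, `φ 0 = 0`,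
`|φ(r)| ≤ C_J |r|^α` on compact intervals `J ⊆ I` with `α ≥ (d-2)/d`, `d ≥ 3`, and `β` is
the inverse of `φ`, then both integrals `∫_R^∞ ρ^{d-1} β(ρ^{-(d-2)}) dρ` and
`∫_R^∞ ρ^{d-1} (-β(-ρ^{-(d-2)})) dρ` diverge. -/
theorem inverse_integral_diverges (d : ℕ) (hd : 3 ≤ d) (α : ℝ)
    (hα : ((d : ℝ) - 2) / d ≤ α)
    (I : Set ℝ) (hIopen : IsOpen I) (hIconv : Convex ℝ I) (h0I : (0 : ℝ) ∈ I)
    (φ : ℝ → ℝ) (hφcont : ContinuousOn φ I) (hφmono : StrictMonoOn φ I) (hφ0 : φ 0 = 0)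
    (hgrowth : ∀ r₁ r₂ : ℝ, Set.Icc r₁ r₂ ⊆ I →
      ∃ C > 0, ∀ r ∈ Set.Icc r₁ r₂, |φ r| ≤ C * |r| ^ α)
    (β : ℝ → ℝ) (hβ : ∀ r ∈ I, β (φ r) = r)
    (R : ℝ) (hR : 0 < R)
    (hrange : Set.Icc (-(R ^ (-((d : ℝ) - 2)))) (R ^ (-((d : ℝ) - 2))) ⊆ φ '' I) :
    (∫⁻ ρ in Set.Ici R,
        ENNReal.ofReal (ρ ^ ((d : ℝ) - 1) * β (ρ ^ (-((d : ℝ) - 2)))) = ⊤) ∧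
    (∫⁻ ρ in Set.Ici R,
        ENNReal.ofReal (ρ ^ ((d : ℝ) - 1) * (-β (-(ρ ^ (-((d : ℝ) - 2)))))) = ⊤) := by
  have hd3 : (3 : ℝ) ≤ (d : ℝ) := by exact_mod_cast hd
  have hdpos : (0 : ℝ) < d := by linarith
  have hαpos : 0 < α := by
    have : 0 < ((d : ℝ) - 2) / d := div_pos (by linarith) hdpos
    linarith
  obtain ⟨C, hC, hkey⟩ := aux_key d hd α hα I hIconv h0I φ hφmono hφ0 hgrowth β hβ R hR hrange
  set c : ℝ := (C ^ α⁻¹)⁻¹ with hcdef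
  have hc : 0 < c := by positivity
  have hexp : (-1 : ℝ) ≤ ((d : ℝ) - 1) + -((d : ℝ) - 2) * α⁻¹ := by
    have h1 : (d : ℝ) - 2 ≤ α * d := by
      have := (div_le_iff₀ hdpos).1 hα
      linarith
    have h2 : ((d : ℝ) - 2) / α ≤ d := (div_le_iff₀ hαpos).2 (by linarith)
    rw [div_eq_mul_inv] at h2
    linarith
  have main : ∀ g : ℝ → ℝ,
      (∀ s : ℝ, 0 < s → s ≤ R ^ (-((d : ℝ) - 2)) → (s / C) ^ α⁻¹ ≤ g s) →
      ∫⁻ ρ in Set.Ici R,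
        ENNReal.ofReal (ρ ^ ((d : ℝ) - 1) * g (ρ ^ (-((d : ℝ) - 2)))) = ⊤ := by
    intro g hg
    apply aux_top hR hc
    intro ρ hρ
    have hρ1 : 1 < ρ := lt_of_le_of_lt (le_max_right _ _) hρ
    have hρR : R < ρ := lt_of_le_of_lt (le_max_left _ _) hρ
    have hρpos : 0 < ρ := by linarith
    set s : ℝ := ρ ^ (-((d : ℝ) - 2)) with hsdef
    have hs : 0 < s := Real.rpow_pos_of_pos hρpos _
    have hss₀ : s ≤ R ^ (-((d : ℝ) - 2)) :=
      Real.rpow_le_rpow_of_nonpos hR hρR.le (by linarith)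
    have hgb := hg s hs hss₀
    have key2 : c * ρ⁻¹ ≤ ρ ^ ((d : ℝ) - 1) * ((s / C) ^ α⁻¹) := by
      have e1 : (s / C) ^ α⁻¹ = ρ ^ (-((d : ℝ) - 2) * α⁻¹) * c := by
        rw [div_eq_mul_inv, Real.mul_rpow hs.le (by positivity),
          Real.inv_rpow hC.le, hsdef, ← Real.rpow_mul hρpos.le]
      rw [e1, ← mul_assoc, ← Real.rpow_add hρpos, mul_comm c ρ⁻¹]
      apply mul_le_mul_of_nonneg_right _ hc.le
      rw [← Real.rpow_neg_one ρ]
      exact Real.rpow_le_rpow_of_exponent_le hρ1.le hexp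
    calc c * ρ⁻¹ ≤ ρ ^ ((d : ℝ) - 1) * ((s / C) ^ α⁻¹) := key2
      _ ≤ ρ ^ ((d : ℝ) - 1) * g s :=
          mul_le_mul_of_nonneg_left hgb (Real.rpow_pos_of_pos hρpos _).le
  exact ⟨main (fun s => β s) (fun s h1 h2 => (hkey s h1 h2).1),
    main (fun s => -β (-s)) (fun s h1 h2 => (hkey s h1 h2).2)⟩
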